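/- arXiv:2105.02721 — 2 statements merged into one kernel-verified Lean document; each statement's English description precedes it below -/
import Mathlib

section
/- Suppose x ∈ ℝ^{L_r}, z ∈ ℝ^{L_s} with x_0 = z_0 = 0 satisfy that all differences x_i - x_l (l<i), z_j - z_m (m<j), and (x_i - x_l) ± (z_j - z_m) lie in 𝒳* = {qπ/K : q∈ℤ} \ {nπ : n∈ℤ}. Then the three sets {x_i mod π : 1≤i≤L_r-1}, {z_j mod π : 1≤j≤L_s-1}, and {(x_i + z_j) mod π : 1≤i≤L_r-1, 1≤j≤L_s-1} are pairwise disjoint subsets of 𝒳** = {aπ/K : a∈ℤ, 1≤a≤K-1}, with cardinalities L_r-1, L_s-1, and (L_r-1)(L_s-1) respectively; consequently L_r·L_s - 1 ≤ K - 1, i.e., L_r·L_s ≤ K. -/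
open MeasureTheory Real Finset

/-- f(x,y) = Σ_{k=0}^{K-1} cos(y - 2kx). -/
noncomputable def fK (K : ℕ) (x y : ℝ) : ℝ :=
  ∑ k ∈ Finset.range K, Real.cos (y - 2 * (k : ℝ) * x)

/-- the hypercube [0, 2π)^L. -/
def cube (L : ℕ) : Set (Fin L → ℝ) := Set.univ.pi fun _ => Set.Ico 0 (2 * Real.pi)

/-- 𝒳* = {qπ/K : q ∈ ℤ} \ {nπ : n ∈ ℤ}. -/
def Xstar (K : ℕ) : Set ℝ :=
  {r | (∃ q : ℤ, r = (q : ℝ) * Real.pi / K) ∧ ∀ n : ℤ, r ≠ (n : ℝ) * Real.pi}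

/-- the representative of a modulo π lying in [0, π). -/
noncomputable def modpi (a : ℝ) : ℝ := a - Real.pi * ⌊a / Real.pi⌋

/-! The whole configuration is governed by the sums `x i + z j`: the hypotheses say exactly
that any two distinct ones differ by an element of `𝒳*`, so `(i, j) ↦ (x i + z j) mod π` is
injective on `Fin Lr × Fin Ls`. Since `x 0 = z 0 = 0`, the three sets are its images of three
disjoint sets of pairs avoiding `(0, 0)`, and all `Lr * Ls - 1` pairs other than `(0, 0)` are
sent injectively into `𝒳**`, which has `K - 1` elements. -/

def Xstarstar (K : ℕ) : Set ℝ :=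
  {r | ∃ q : ℤ, 1 ≤ q ∧ q ≤ (K : ℤ) - 1 ∧ r = (q : ℝ) * Real.pi / K}

lemma neg_mem_Xstar {K : ℕ} {a : ℝ} (ha : a ∈ Xstar K) : -a ∈ Xstar K := by
  obtain ⟨⟨q, rfl⟩, hn⟩ := ha
  refine ⟨⟨-q, by push_cast; ring⟩, fun n h => hn (-n) ?_⟩
  push_cast
  linarith

lemma modpi_nonneg (a : ℝ) : 0 ≤ modpi a := by
  have := Int.floor_le (a / π)
  rw [modpi]
  nlinarith [pi_pos, mul_div_cancel₀ a pi_ne_zero]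

lemma modpi_lt_pi (a : ℝ) : modpi a < π := by
  have := Int.lt_floor_add_one (a / π)
  rw [modpi]
  nlinarith [pi_pos, mul_div_cancel₀ a pi_ne_zero]

lemma modpi_mem_Xstarstar {K : ℕ} {a : ℝ} (ha : a ∈ Xstar K) : modpi a ∈ Xstarstar K := by
  obtain ⟨⟨q, rfl⟩, hq⟩ := ha
  have hK : K ≠ 0 := by
    rintro rfl
    exact hq 0 (by simp)
  have hK' : (0 : ℝ) < K := by positivity
  set n := ⌊q * π / K / π⌋
  have hmod : modpi (q * π / K) = ((q - K * n : ℤ) : ℝ) * π / K := by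
    show q * π / K - π * n = _
    push_cast
    field_simp
  have h0 := modpi_nonneg (q * π / K)
  have h1 := modpi_lt_pi (q * π / K)
  rw [hmod, le_div_iff₀ hK', zero_mul, mul_nonneg_iff_of_pos_right pi_pos] at h0
  rw [hmod, div_lt_iff₀ hK', mul_comm π, mul_lt_mul_iff_left₀ pi_pos] at h1
  have hne : q - K * n ≠ 0 := by
    intro h
    apply hq n
    rw [show q = K * n by omega]
    push_cast
    field_simp
  refine ⟨q - K * n, ?_, ?_, hmod⟩
  · have : (0 : ℤ) ≤ q - K * n := by exact_mod_cast h0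
    omega
  · have : q - K * n < (K : ℤ) := by exact_mod_cast h1
    omega

lemma modpi_ne_of_sub_mem_Xstar {K : ℕ} {a b : ℝ} (h : a - b ∈ Xstar K) : modpi a ≠ modpi b := by
  intro he
  apply h.2 (⌊a / π⌋ - ⌊b / π⌋)
  rw [modpi, modpi] at he
  push_cast
  linarith

lemma ncard_le_of_subset_Xstarstar {K : ℕ} {s : Set ℝ} (hs : s ⊆ Xstarstar K) :
    s.ncard ≤ K - 1 := by
  have h : Xstarstar K = (fun q : ℤ => (q : ℝ) * π / K) '' Set.Icc 1 ((K : ℤ) - 1) := by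
    ext r
    simp [Xstarstar, and_assoc, eq_comm]
  calc s.ncard ≤ (Xstarstar K).ncard := Set.ncard_le_ncard hs (h ▸ (Set.finite_Icc _ _).image _)
    _ ≤ (Set.Icc 1 ((K : ℤ) - 1)).ncard := h ▸ Set.ncard_image_le
    _ = K - 1 := by rw [Set.ncard_eq_toFinset_card', Set.toFinset_Icc, Int.card_Icc]; omega

lemma injective_modpi_comp {ι : Type*} {K : ℕ} {f : ι → ℝ}
    (hf : Pairwise fun p q => f p - f q ∈ Xstar K) : (modpi ∘ f).Injective :=
  fun _ _ h => by_contra fun hne => modpi_ne_of_sub_mem_Xstar (hf hne) h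

lemma ncard_compl_singleton {α : Type*} [Finite α] (a : α) :
    ({a}ᶜ : Set α).ncard = Nat.card α - 1 := by
  rw [Set.ncard_compl, Set.ncard_singleton]

section PairwiseDifferences

variable {G : Type*} [AddCommGroup G] {S : Set G} (hS : ∀ a ∈ S, -a ∈ S)
include hS

lemma pairwise_sub_mem_of_lt {ι : Type*} [LinearOrder ι] {x : ι → G}
    (hx : ∀ l i, l < i → x i - x l ∈ S) : Pairwise fun i l => x i - x l ∈ S := by
  intro i l hne
  rcases hne.lt_or_gt with h | h
  · simpa using hS _ (hx i l h)
  · exact hx l i h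

lemma pairwise_add_sub_add_mem {ι κ : Type*} [LinearOrder ι] [LinearOrder κ]
    {x : ι → G} {z : κ → G}
    (hx : ∀ l i, l < i → x i - x l ∈ S) (hz : ∀ m j, m < j → z j - z m ∈ S)
    (hxz : ∀ l i, l < i → ∀ m j, m < j →
      (x i - x l) + (z j - z m) ∈ S ∧ (x i - x l) - (z j - z m) ∈ S) :
    Pairwise fun p q : ι × κ => (x p.1 + z p.2) - (x q.1 + z q.2) ∈ S := by
  have cross_of_lt : ∀ l i, l < i → ∀ m j, m ≠ j → (x i - x l) + (z j - z m) ∈ S := by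
    intro l i hli m j hmj
    rcases hmj.lt_or_gt with h | h
    · exact (hxz l i hli m j h).1
    · simpa [sub_eq_add_neg] using (hxz l i hli j m h).2
  rintro ⟨i, j⟩ ⟨l, m⟩ hne
  rw [add_sub_add_comm]
  obtain rfl | hil := eq_or_ne i l
  · simpa using pairwise_sub_mem_of_lt hS hz (fun h => hne (by rw [h]))
  obtain rfl | hjm := eq_or_ne j m
  · simpa using pairwise_sub_mem_of_lt hS hx hil
  rcases hil.lt_or_gt with h | h
  · simpa [add_comm] using hS _ (cross_of_lt i l h j m hjm)
  · exact cross_of_lt l i h m j hjm.symm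

end PairwiseDifferences

theorem stmt15 (K Lr Ls : ℕ) (hK : 1 ≤ K) (hLr : 1 ≤ Lr) (hLs : 1 ≤ Ls)
    (x : Fin Lr → ℝ) (z : Fin Ls → ℝ)
    (hx0 : x ⟨0, by omega⟩ = 0) (hz0 : z ⟨0, by omega⟩ = 0)
    (hx : ∀ l i : Fin Lr, l < i → x i - x l ∈ Xstar K)
    (hz : ∀ m j : Fin Ls, m < j → z j - z m ∈ Xstar K)
    (hxz : ∀ l i : Fin Lr, l < i → ∀ m j : Fin Ls, m < j →
      (x i - x l) + (z j - z m) ∈ Xstar K ∧ (x i - x l) - (z j - z m) ∈ Xstar K) :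
    (({r : ℝ | ∃ i : Fin Lr, 1 ≤ (i : ℕ) ∧ r = modpi (x i)} ⊆
        {r : ℝ | ∃ q : ℤ, 1 ≤ q ∧ q ≤ (K : ℤ) - 1 ∧ r = (q : ℝ) * Real.pi / K}) ∧
     ({r : ℝ | ∃ j : Fin Ls, 1 ≤ (j : ℕ) ∧ r = modpi (z j)} ⊆
        {r : ℝ | ∃ q : ℤ, 1 ≤ q ∧ q ≤ (K : ℤ) - 1 ∧ r = (q : ℝ) * Real.pi / K}) ∧
     ({r : ℝ | ∃ (i : Fin Lr) (j : Fin Ls), 1 ≤ (i : ℕ) ∧ 1 ≤ (j : ℕ) ∧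
          r = modpi (x i + z j)} ⊆
        {r : ℝ | ∃ q : ℤ, 1 ≤ q ∧ q ≤ (K : ℤ) - 1 ∧ r = (q : ℝ) * Real.pi / K})) ∧
    (Disjoint {r : ℝ | ∃ i : Fin Lr, 1 ≤ (i : ℕ) ∧ r = modpi (x i)}
        {r : ℝ | ∃ j : Fin Ls, 1 ≤ (j : ℕ) ∧ r = modpi (z j)} ∧
     Disjoint {r : ℝ | ∃ i : Fin Lr, 1 ≤ (i : ℕ) ∧ r = modpi (x i)}
        {r : ℝ | ∃ (i : Fin Lr) (j : Fin Ls), 1 ≤ (i : ℕ) ∧ 1 ≤ (j : ℕ) ∧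
          r = modpi (x i + z j)} ∧
     Disjoint {r : ℝ | ∃ j : Fin Ls, 1 ≤ (j : ℕ) ∧ r = modpi (z j)}
        {r : ℝ | ∃ (i : Fin Lr) (j : Fin Ls), 1 ≤ (i : ℕ) ∧ 1 ≤ (j : ℕ) ∧
          r = modpi (x i + z j)}) ∧
    ({r : ℝ | ∃ i : Fin Lr, 1 ≤ (i : ℕ) ∧ r = modpi (x i)}.ncard = Lr - 1 ∧
     {r : ℝ | ∃ j : Fin Ls, 1 ≤ (j : ℕ) ∧ r = modpi (z j)}.ncard = Ls - 1 ∧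
     {r : ℝ | ∃ (i : Fin Lr) (j : Fin Ls), 1 ≤ (i : ℕ) ∧ 1 ≤ (j : ℕ) ∧
        r = modpi (x i + z j)}.ncard = (Lr - 1) * (Ls - 1)) ∧
    Lr * Ls ≤ K := by
  set i0 : Fin Lr := ⟨0, by omega⟩
  set j0 : Fin Ls := ⟨0, by omega⟩
  set g : Fin Lr × Fin Ls → ℝ := modpi ∘ fun p => x p.1 + z p.2
  have hdiff := pairwise_add_sub_add_mem (fun _ => neg_mem_Xstar) hx hz hxz
  have hg : g.Injective := injective_modpi_comp hdiff
  have hgX : ∀ s, (i0, j0) ∉ s → g '' s ⊆ Xstarstar K := by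
    rintro s hs _ ⟨p, hp, rfl⟩
    apply modpi_mem_Xstarstar
    simpa [hx0, hz0] using hdiff (ne_of_mem_of_not_mem hp hs)
  have hI : ∀ i : Fin Lr, 1 ≤ (i : ℕ) ↔ i ≠ i0 := fun i => by simp [i0, Fin.ext_iff]; omega
  have hJ : ∀ j : Fin Ls, 1 ≤ (j : ℕ) ↔ j ≠ j0 := fun j => by simp [j0, Fin.ext_iff]; omega
  have hA : {r | ∃ i : Fin Lr, 1 ≤ (i : ℕ) ∧ r = modpi (x i)} = g '' ({i0}ᶜ ×ˢ {j0}) := by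
    ext r; simp [g, hI, hz0, eq_comm]
  have hB : {r | ∃ j : Fin Ls, 1 ≤ (j : ℕ) ∧ r = modpi (z j)} = g '' ({i0} ×ˢ {j0}ᶜ) := by
    ext r; simp [g, hJ, hx0, eq_comm]
  have hC : {r | ∃ (i : Fin Lr) (j : Fin Ls), 1 ≤ (i : ℕ) ∧ 1 ≤ (j : ℕ) ∧
      r = modpi (x i + z j)} = g '' ({i0}ᶜ ×ˢ {j0}ᶜ) := by
    ext r; simp [g, hI, hJ, eq_comm, and_assoc]
  rw [hA, hB, hC]
  refine ⟨⟨hgX _ (by simp), hgX _ (by simp), hgX _ (by simp)⟩, ?_, ?_, ?_⟩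
  · refine ⟨?_, ?_, ?_⟩ <;> exact (Set.disjoint_image_iff hg).2 (Set.disjoint_prod.2 (by simp))
  · simp [Set.ncard_image_of_injective _ hg, Set.ncard_prod, ncard_compl_singleton]
  · have := ncard_le_of_subset_Xstarstar (hgX {(i0, j0)}ᶜ (by simp))
    rw [Set.ncard_image_of_injective _ hg, ncard_compl_singleton, Nat.card_prod,
      Nat.card_fin, Nat.card_fin] at this
    omega
end

section
/- Let S_a(x,z,y,v) = K·Ḡ + J_a(x,z,y,v) where Ḡ ≥ 0 is a constant and J_a is the nonnegative-coefficient linear combination of f-terms defined earlier, and suppose L_r·L_s ≤ K. Then sup_{x,z} inf_{y,v} S_a(x,z,y,v) = K·Ḡ, and any (x,z) with all phase-slope differences Δx_w, Δz_p, Δx_w ± Δz_p in 𝒳* attains the supremum; moreover for such (x,z), S_a(x,z,y,v) = K·Ḡ for every (y,v). -/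
open MeasureTheory Real Finset

/-- the set of ordered index pairs (first strictly less than second). -/
def pairs (L : ℕ) : Finset (Fin L × Fin L) := Finset.univ.filter fun p => p.1 < p.2

/-- the function J_a from eq. (25)/(eq:J:wp:compact). -/
noncomputable def Ja (K Lr Ls : ℕ) (c c' : Fin Lr × Fin Lr → ℝ) (d d' : Fin Ls × Fin Ls → ℝ)
    (x : Fin Lr → ℝ) (z : Fin Ls → ℝ) (y : Fin Lr → ℝ) (v : Fin Ls → ℝ) : ℝ :=
  (∑ w ∈ pairs Lr, c w * fK K (x w.2 - x w.1) (y w.2 - y w.1)) +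
  (∑ p ∈ pairs Ls, d p * fK K (z p.2 - z p.1) (v p.2 - v p.1)) +
  ∑ w ∈ pairs Lr, ∑ p ∈ pairs Ls, (c' w * d' p / 2) *
    (fK K ((x w.2 - x w.1) + (z p.2 - z p.1)) ((y w.2 - y w.1) + (v p.2 - v p.1)) +
     fK K ((x w.2 - x w.1) - (z p.2 - z p.1)) ((y w.2 - y w.1) - (v p.2 - v p.1)))

/-- D_X ⊂ 𝒳*: all phase-slope differences Δx_w, Δz_p, Δx_w ± Δz_p lie in 𝒳*. -/
def DXsub (K Lr Ls : ℕ) (x : Fin Lr → ℝ) (z : Fin Ls → ℝ) : Prop :=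
  (∀ w ∈ pairs Lr, x w.2 - x w.1 ∈ Xstar K) ∧
  (∀ p ∈ pairs Ls, z p.2 - z p.1 ∈ Xstar K) ∧
  (∀ w ∈ pairs Lr, ∀ p ∈ pairs Ls,
    (x w.2 - x w.1) + (z p.2 - z p.1) ∈ Xstar K ∧
    (x w.2 - x w.1) - (z p.2 - z p.1) ∈ Xstar K)

/-!
Every `f`-term of `J_a` depends on `y` (resp. `v`) only through a difference `y_j - y_i`
(resp. `v_j - v_i`), shifted by a constant, and `f(x, ·)` is `π`-antiperiodic. Averaging `J_a`
over the vertices `{0, π}^{L_r} × {0, π}^{L_s}` therefore gives `0`: flipping one bit of the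
vertex negates the term. So some vertex has `J_a ≤ 0`, and every inner infimum is at most `KḠ`.

Conversely, if `x = qπ/K ∉ πℤ` then `e^{-2ix} ≠ 1` is a `K`-th root of unity, so the geometric sum
`f(x, y) = Re (e^{iy} Σ_k e^{-2ikx})` vanishes and `J_a(x, z, ·, ·) ≡ 0` on `D_X ⊂ 𝒳*`. The
mixed-radix phases `x_i = L_s i π/K`, `z_j = j π/K` lie there: every slope difference is `qπ/K`
with `q = L_s A ± B`, `0 ≤ A < L_r`, `|B| < L_s`, not both zero, hence `0 < q < L_r L_s ≤ K`.
-/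

open Function

theorem fK_antiperiodic (K : ℕ) (x : ℝ) : Antiperiodic (fK K x) π := fun y => by
  simp only [fK, ← sum_neg_distrib, add_sub_right_comm, Real.cos_add_pi]

theorem fK_eq_zero_of_mem_Xstar {K : ℕ} {x : ℝ} (hx : x ∈ Xstar K) (y : ℝ) : fK K x y = 0 := by
  obtain ⟨⟨q, rfl⟩, hnπ⟩ := hx
  have hK : (K : ℂ) ≠ 0 := fun h => hnπ 0 (by simp_all)
  set r : ℂ := Complex.exp (-2 * (q * π / K : ℝ) * Complex.I)
  have hre : fK K (q * π / K) y = (Complex.exp (y * Complex.I) * ∑ k ∈ range K, r ^ k).re := by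
    rw [mul_sum, Complex.re_sum]
    refine sum_congr rfl fun k _ => ?_
    rw [← Complex.exp_nat_mul, ← Complex.exp_add, ← Complex.exp_ofReal_mul_I_re]
    push_cast
    ring_nf
  have hr1 : r ≠ 1 := by
    intro h
    obtain ⟨n, hn⟩ := Complex.exp_eq_one_iff.mp h
    have h2 := mul_right_cancel₀ Complex.I_ne_zero
      (show (-2 * ((q * π / K : ℝ) : ℂ)) * Complex.I = (n * 2 * π) * Complex.I by
        linear_combination hn)
    refine hnπ (-n) (Complex.ofReal_injective ?_)
    push_cast at h2 ⊢
    linear_combination h2 / -2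
  have hrK : r ^ K = 1 := by
    rw [← Complex.exp_nat_mul, ← Complex.exp_int_mul_two_pi_mul_I (-q)]
    push_cast
    field_simp
  rw [hre, geom_sum_eq hr1, hrK, sub_self, zero_div, mul_zero, Complex.zero_re]

noncomputable def piVertex {L : ℕ} (ε : Fin L → Bool) : Fin L → ℝ := fun i => if ε i then π else 0

theorem piVertex_mem_cube {L : ℕ} (ε : Fin L → Bool) : piVertex ε ∈ cube L := fun i _ => by
  unfold piVertex
  split_ifs <;> constructor <;> linarith [pi_pos]

theorem Function.Antiperiodic.sum_piVertex_sub_eq_zero {L : ℕ} {g : ℝ → ℝ}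
    (hg : Antiperiodic g π) {i j : Fin L} (hij : i ≠ j) :
    ∑ ε : Fin L → Bool, g (piVertex ε j - piVertex ε i) = 0 := by
  refine sum_ninvolution (fun ε => update ε j (!ε j)) (fun ε => ?_)
    (fun ε _ h => by simpa using congrFun h j) (fun _ => mem_univ _) (fun ε => by simp)
  have hi : piVertex (update ε j (!ε j)) i = piVertex ε i := by
    simp [piVertex, update_of_ne hij]
  have hj : piVertex (update ε j (!ε j)) j = if ε j then 0 else π := by
    cases ε j <;> simp [piVertex]
  rw [hi, hj]
  generalize piVertex ε i = t
  have hshift : g (π - t) = -g (-t) := by rw [← hg (-t), neg_add_eq_sub]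
  cases h : ε j <;> simp [piVertex, h, hshift]

theorem lt_of_mem_pairs {L : ℕ} {w : Fin L × Fin L} (hw : w ∈ pairs L) : w.1 < w.2 :=
  (mem_filter.mp hw).2

section Ja

variable {K Lr Ls : ℕ} (c c' : Fin Lr × Fin Lr → ℝ) (d d' : Fin Ls × Fin Ls → ℝ)
  (x : Fin Lr → ℝ) (z : Fin Ls → ℝ)

theorem sum_piVertex_Ja_eq_zero :
    ∑ ε : Fin Lr → Bool, ∑ δ : Fin Ls → Bool, Ja K Lr Ls c c' d d' x z (piVertex ε) (piVertex δ)
      = 0 := by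
  have sum_three (a b e : ℝ) (ha : a = 0) (hb : b = 0) (he : e = 0) : a + b + e = 0 := by
    simp [ha, hb, he]
  simp only [Ja, sum_add_distrib]
  refine sum_three _ _ _ ?_ ?_ ?_
  · rw [sum_comm]
    refine sum_eq_zero fun δ _ => ?_
    rw [sum_comm]
    refine sum_eq_zero fun w hw => ?_
    rw [← mul_sum, (fK_antiperiodic _ _).sum_piVertex_sub_eq_zero (lt_of_mem_pairs hw).ne,
      mul_zero]
  · refine sum_eq_zero fun ε _ => ?_
    rw [sum_comm]
    refine sum_eq_zero fun p hp => ?_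
    rw [← mul_sum, (fK_antiperiodic _ _).sum_piVertex_sub_eq_zero (lt_of_mem_pairs hp).ne,
      mul_zero]
  · rw [sum_comm]
    refine sum_eq_zero fun δ _ => ?_
    rw [sum_comm]
    refine sum_eq_zero fun w hw => ?_
    rw [sum_comm]
    refine sum_eq_zero fun p _ => ?_
    rw [← mul_sum, sum_add_distrib]
    have hne := (lt_of_mem_pairs hw).ne
    exact mul_eq_zero_of_right _ <| (congrArg₂ (· + ·)
      (((fK_antiperiodic _ _).add_const _).sum_piVertex_sub_eq_zero hne)
      (((fK_antiperiodic _ _).sub_const _).sum_piVertex_sub_eq_zero hne)).trans (add_zero 0)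

theorem exists_Ja_nonpos :
    ∃ y ∈ cube Lr, ∃ v ∈ cube Ls, Ja K Lr Ls c c' d d' x z y v ≤ 0 := by
  have hsum : ∑ εδ : (Fin Lr → Bool) × (Fin Ls → Bool),
      Ja K Lr Ls c c' d d' x z (piVertex εδ.1) (piVertex εδ.2) ≤
        ∑ _εδ : (Fin Lr → Bool) × (Fin Ls → Bool), 0 := by
    simp only [Fintype.sum_prod_type, sum_piVertex_Ja_eq_zero, sum_const_zero, le_refl]
  obtain ⟨⟨ε, δ⟩, -, hneg⟩ := exists_le_of_sum_le univ_nonempty hsum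
  exact ⟨_, piVertex_mem_cube ε, _, piVertex_mem_cube δ, hneg⟩

theorem Ja_eq_zero_of_DXsub (hD : DXsub K Lr Ls x z) (y : Fin Lr → ℝ) (v : Fin Ls → ℝ) :
    Ja K Lr Ls c c' d d' x z y v = 0 := by
  obtain ⟨hx, hz, hxz⟩ := hD
  simp +contextual [Ja, fK_eq_zero_of_mem_Xstar, hx, hz, hxz]

theorem continuous_Ja :
    Continuous fun yv : (Fin Lr → ℝ) × (Fin Ls → ℝ) => Ja K Lr Ls c c' d d' x z yv.1 yv.2 := by
  unfold Ja fK
  fun_prop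

end Ja

theorem bddBelow_cube_image {m n : ℕ} {F : (Fin m → ℝ) → (Fin n → ℝ) → ℝ}
    (hF : Continuous fun yv : (Fin m → ℝ) × (Fin n → ℝ) => F yv.1 yv.2) :
    BddBelow {s | ∃ y v, y ∈ cube m ∧ v ∈ cube n ∧ s = F y v} := by
  have hcompact : ∀ L, IsCompact (Set.univ.pi fun _ : Fin L => Set.Icc 0 (2 * π)) :=
    fun _ => isCompact_univ_pi fun _ => isCompact_Icc
  refine ((hcompact m).prod (hcompact n)).bddBelow_image hF.continuousOn |>.mono ?_
  rintro s ⟨y, v, hy, hv, rfl⟩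
  exact ⟨(y, v), ⟨fun i _ => Set.Ico_subset_Icc_self (hy i trivial),
    fun i _ => Set.Ico_subset_Icc_self (hv i trivial)⟩, rfl⟩

theorem int_mul_pi_div_mem_Xstar {K : ℕ} {q : ℤ} (hq0 : 0 < q) (hqK : q < K) :
    (q : ℝ) * (π / K) ∈ Xstar K := by
  have hK : (K : ℝ) ≠ 0 := by norm_cast; omega
  refine ⟨⟨q, (mul_div_assoc _ _ _).symm⟩, fun n hn => ?_⟩
  have hqn : (q : ℝ) = n * K := by
    field_simp at hn
    linear_combination hn
  have : q = n * K := by exact_mod_cast hqn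
  rcases le_or_gt n 0 with hn0 | hn0 <;> nlinarith

theorem DXsub_mixedRadix {K Lr Ls : ℕ} (hLr : 1 ≤ Lr) (hLs : 1 ≤ Ls) (hLL : Lr * Ls ≤ K) :
    DXsub K Lr Ls (fun i => ((Ls * i : ℕ) : ℤ) * (π / K)) (fun j => ((j : ℕ) : ℤ) * (π / K)) := by
  have hmem : ∀ A B : ℤ, 0 ≤ A → A < Lr → -Ls < B → B < Ls → (0 < A ∨ 0 < B) →
      ((Ls * A + B : ℤ) : ℝ) * (π / K) ∈ Xstar K := by
    intro A B hA0 hAL hB hB' hpos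
    have hLL' : (Lr : ℤ) * Ls ≤ K := by exact_mod_cast hLL
    refine int_mul_pi_div_mem_Xstar ?_ (by nlinarith)
    rcases hpos with h | h <;> nlinarith
  have hpair : ∀ {L : ℕ} {w : Fin L × Fin L}, w ∈ pairs L →
      ((w.1 : ℕ) : ℤ) < (w.2 : ℕ) ∧ ((w.2 : ℕ) : ℤ) < L := fun {_ w} hw =>
    ⟨by exact_mod_cast lt_of_mem_pairs hw, by exact_mod_cast w.2.isLt⟩
  refine ⟨fun w hw => ?_, fun p hp => ?_, fun w hw p hp => ?_⟩
  · obtain ⟨hw1, hw2⟩ := hpair hw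
    convert hmem (w.2 - w.1) 0 (by omega) (by omega) (by omega) (by omega) (by omega) using 1
    push_cast
    ring
  · obtain ⟨hp1, hp2⟩ := hpair hp
    convert hmem 0 (p.2 - p.1) le_rfl (by omega) (by omega) (by omega) (by omega) using 1
    push_cast
    ring
  · obtain ⟨hw1, hw2⟩ := hpair hw
    obtain ⟨hp1, hp2⟩ := hpair hp
    constructor
    · convert hmem (w.2 - w.1) (p.2 - p.1) (by omega) (by omega) (by omega) (by omega) (by omega)
        using 1
      push_cast
      ring
    · convert hmem (w.2 - w.1) (p.1 - p.2) (by omega) (by omega) (by omega) (by omega) (by omega)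
        using 1
      push_cast
      ring

theorem stmt17_general (K Lr Ls : ℕ) (hLr : 1 ≤ Lr) (hLs : 1 ≤ Ls)
    (hLL : Lr * Ls ≤ K)
    (G : ℝ)
    (c c' : Fin Lr × Fin Lr → ℝ) (d d' : Fin Ls × Fin Ls → ℝ) :
    sSup {r : ℝ | ∃ (x : Fin Lr → ℝ) (z : Fin Ls → ℝ),
        r = sInf {s : ℝ | ∃ y v, y ∈ cube Lr ∧ v ∈ cube Ls ∧
          s = (K : ℝ) * G + Ja K Lr Ls c c' d d' x z y v}} = (K : ℝ) * G ∧
    ∀ (x : Fin Lr → ℝ) (z : Fin Ls → ℝ), DXsub K Lr Ls x z →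
      (sInf {s : ℝ | ∃ y v, y ∈ cube Lr ∧ v ∈ cube Ls ∧
          s = (K : ℝ) * G + Ja K Lr Ls c c' d d' x z y v} = (K : ℝ) * G ∧
       ∀ y ∈ cube Lr, ∀ v ∈ cube Ls,
         (K : ℝ) * G + Ja K Lr Ls c c' d d' x z y v = (K : ℝ) * G) := by
  set S : (Fin Lr → ℝ) → (Fin Ls → ℝ) → Set ℝ := fun x z =>
    {s | ∃ y v, y ∈ cube Lr ∧ v ∈ cube Ls ∧ s = K * G + Ja K Lr Ls c c' d d' x z y v}
  have hle (x z) : sInf (S x z) ≤ K * G := by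
    obtain ⟨y, hy, v, hv, hJ⟩ := exists_Ja_nonpos c c' d d' x z
    refine (csInf_le (bddBelow_cube_image ?_) ⟨y, v, hy, hv, rfl⟩).trans (by linarith)
    exact continuous_const.add (continuous_Ja c c' d d' x z)
  have hDX (x z) (hD : DXsub K Lr Ls x z) : sInf (S x z) = K * G ∧
      ∀ y ∈ cube Lr, ∀ v ∈ cube Ls, K * G + Ja K Lr Ls c c' d d' x z y v = K * G := by
    have hJ := Ja_eq_zero_of_DXsub c c' d d' x z hD
    refine ⟨?_, fun y _ v _ => by rw [hJ, add_zero]⟩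
    have hS : S x z = {(K : ℝ) * G} := Set.eq_singleton_iff_unique_mem.mpr
      ⟨⟨_, _, piVertex_mem_cube (fun _ => false), piVertex_mem_cube (fun _ => false),
        by rw [hJ, add_zero]⟩, fun _ ⟨_, _, _, _, h⟩ => by rw [h, hJ, add_zero]⟩
    rw [hS, csInf_singleton]
  refine ⟨IsGreatest.csSup_eq ⟨⟨_, _, (hDX _ _ (DXsub_mixedRadix hLr hLs hLL)).1.symm⟩, ?_⟩, hDX⟩
  rintro r ⟨x, z, rfl⟩
  exact hle x z

theorem stmt17 (K Lr Ls : ℕ) (hK : 1 ≤ K) (hLr : 1 ≤ Lr) (hLs : 1 ≤ Ls)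
    (h2 : 2 < Lr + Ls) (hLL : Lr * Ls ≤ K)
    (G : ℝ) (hG : 0 ≤ G)
    (c c' : Fin Lr × Fin Lr → ℝ) (d d' : Fin Ls × Fin Ls → ℝ)
    (hc : ∀ w, 0 ≤ c w) (hc' : ∀ w, 0 ≤ c' w) (hd : ∀ p, 0 ≤ d p) (hd' : ∀ p, 0 ≤ d' p) :
    sSup {r : ℝ | ∃ (x : Fin Lr → ℝ) (z : Fin Ls → ℝ),
        r = sInf {s : ℝ | ∃ y v, y ∈ cube Lr ∧ v ∈ cube Ls ∧
          s = (K : ℝ) * G + Ja K Lr Ls c c' d d' x z y v}} = (K : ℝ) * G ∧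
    ∀ (x : Fin Lr → ℝ) (z : Fin Ls → ℝ), DXsub K Lr Ls x z →
      (sInf {s : ℝ | ∃ y v, y ∈ cube Lr ∧ v ∈ cube Ls ∧
          s = (K : ℝ) * G + Ja K Lr Ls c c' d d' x z y v} = (K : ℝ) * G ∧
       ∀ y ∈ cube Lr, ∀ v ∈ cube Ls,
         (K : ℝ) * G + Ja K Lr Ls c c' d d' x z y v = (K : ℝ) * G) :=
  stmt17_general K Lr Ls hLr hLs hLL G c c' d d'
end
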